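/- For every n ≥ −1, a finite word p is a palindromic prefix of the p-singular word z_n if and only if p = z_i for some i ∈ {−1, 1, 3, …, n−2, n} when n is odd, and p = z_i for some i ∈ {−1, 0, 2, …, n−2, n} when n is even (in particular, the palindromic prefixes of z_n are exactly the z_i with −1 ≤ i ≤ n and i of the same parity as n, together with the empty word z_{−1}). -/
import Mathlib


/-- The finite word `u` occurs at position `j` in the infinite word `w`. -/
def OccursAt (u : List ℕ) (w : ℕ → ℕ) (j : ℕ) : Prop :=
  ∀ i < u.length, w (j + i) = u.getD i 0

/-- The finite word `u` is a prefix of the infinite word `w`. -/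
def InfPrefix (u : List ℕ) (w : ℕ → ℕ) : Prop :=
  OccursAt u w 0

/-- The suffix of the infinite word `w` starting at position `j`. -/
def suffixFrom (w : ℕ → ℕ) (j : ℕ) : ℕ → ℕ :=
  fun i => w (j + i)

/-- The finite word `u` is a palindrome. -/
def Pal (u : List ℕ) : Prop := u.reverse = u
/-- The `m`-bonacci morphism `φ_m` on letters:
`φ_m(k) = 0·(k+1)` for `0 ≤ k ≤ m-2`, and `φ_m(m-1) = 0`. -/
def phiL (m a : ℕ) : List ℕ := if a = m - 1 then [0] else [0, a + 1]

/-- The `m`-bonacci morphism applied to a finite word. -/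
def phiW (m : ℕ) (u : List ℕ) : List ℕ := u.flatMap (phiL m)

/-- The iterates `h n = φ_mⁿ(0)`. -/
def hword (m : ℕ) : ℕ → List ℕ
  | 0 => [0]
  | n + 1 => phiW m (hword m n)

/-- The `m`-bonacci word, the infinite fixed point of `φ_m` beginning with `0`
(its `i`-th letter is the `i`-th letter of any sufficiently long iterate `φ_mⁿ(0)`). -/
def mbon (m : ℕ) : ℕ → ℕ := fun i => (hword m (i + 1)).getD i 0

/-- Auxiliary course-of-values construction for the p-singular words:
`zsAux m (k+1) i` gives the correct value of the (index-shifted) p-singular word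
`z_{i-1}` for every `i ≤ k`. -/
def zsAux (m : ℕ) : ℕ → ℕ → List ℕ
  | 0, _ => []
  | k + 1, i =>
    if i < k then zsAux m k i
    else if i = 0 then []
    else if i = 1 then [0]
    else if i ≤ m then
      -- here `i = n+1` with `1 ≤ n ≤ m-1`:
      -- `z_n = z_{n-2} z_{n-3} ⋯ z_1 z_0 · n · z_0 z_1 ⋯ z_{n-3} z_{n-2}`
      (((List.range (i - 2)).map (fun j => zsAux m k (i - 2 - j))).flatten)
        ++ [i - 1]
        ++ (((List.range (i - 2)).map (fun j => zsAux m k (1 + j))).flatten)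
    else
      -- here `i = n+1` with `n ≥ m`:
      -- `z_n = z_{n-2} ⋯ z_{n-(m-1)} · z_{n-m} · z_{n-(m+1)} · z_{n-m} · z_{n-(m-1)} ⋯ z_{n-2}`
      (((List.range (m - 2)).map (fun j => zsAux m k (i - 2 - j))).flatten)
        ++ zsAux m k (i - m) ++ zsAux m k (i - m - 1) ++ zsAux m k (i - m)
        ++ (((List.range (m - 2)).map (fun j => zsAux m k (i - m + 1 + j))).flatten)

/-- The (index-shifted) p-singular words for the `m`-bonacci word:
`zsw m 0 = z₋₁ = ε`, and `zsw m (n+1) = zₙ` for `n ≥ 0`, where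
`z₀ = 0`, `zₙ = z_{n-2} z_{n-3} ⋯ z_1 z_0 · n · z_0 z_1 ⋯ z_{n-3} z_{n-2}` for `1 ≤ n ≤ m-1`
(`n` denoting the single letter `n`), and
`zₙ = z_{n-2} z_{n-3} ⋯ z_{n-(m-1)} z_{n-m} z_{n-(m+1)} z_{n-m} z_{n-(m-1)} ⋯ z_{n-3} z_{n-2}`
for `n ≥ m`. -/
def zsw (m k : ℕ) : List ℕ := zsAux m (k + 1) k

/-! ### Auxiliary development -/

lemma zsAux_eq_zsw (m : ℕ) : ∀ k i, i < k → zsAux m k i = zsw m i := by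
  intro k
  induction k with
  | zero => intro i h; omega
  | succ k ih =>
    intro i h
    rcases Nat.lt_or_ge i k with h' | h'
    · rw [zsAux.eq_2, if_pos h']; exact ih i h'
    · have : i = k := by omega
      subst this; rfl

lemma zsw_zero (m : ℕ) : zsw m 0 = [] := by
  rw [zsw, zsAux.eq_2]; simp

lemma zsw_one (m : ℕ) : zsw m 1 = [0] := by
  rw [zsw, zsAux.eq_2]; simp

/-- descending run `Z a, Z (a-1), …, Z (a-c+1)` -/
def dRun (m a c : ℕ) : List ℕ := ((List.range c).map (fun j => zsw m (a - j))).flatten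

/-- ascending run `Z b, Z (b+1), …, Z (b+c-1)` -/
def aRun (m b c : ℕ) : List ℕ := ((List.range c).map (fun j => zsw m (b + j))).flatten

lemma zsw_small (m i : ℕ) (h2 : 2 ≤ i) (him : i ≤ m) :
    zsw m i = dRun m (i-2) (i-2) ++ [i-1] ++ aRun m 1 (i-2) := by
  conv_lhs => rw [zsw, zsAux.eq_2]
  rw [if_neg (by omega), if_neg (by omega), if_neg (by omega), if_pos him]
  have e1 : (List.range (i-2)).map (fun j => zsAux m i (i-2-j))
      = (List.range (i-2)).map (fun j => zsw m (i-2-j)) :=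
    List.map_congr_left (fun j hj => zsAux_eq_zsw m i _ (by rw [List.mem_range] at hj; omega))
  have e2 : (List.range (i-2)).map (fun j => zsAux m i (1+j))
      = (List.range (i-2)).map (fun j => zsw m (1+j)) :=
    List.map_congr_left (fun j hj => zsAux_eq_zsw m i _ (by rw [List.mem_range] at hj; omega))
  rw [e1, e2]; rfl

lemma zsw_big (m i : ℕ) (hm : 2 ≤ m) (him : m < i) :
    zsw m i = dRun m (i-2) (m-2) ++ zsw m (i-m) ++ zsw m (i-m-1) ++ zsw m (i-m)
      ++ aRun m (i-m+1) (m-2) := by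
  conv_lhs => rw [zsw, zsAux.eq_2]
  rw [if_neg (by omega), if_neg (by omega), if_neg (by omega), if_neg (by omega)]
  rw [zsAux_eq_zsw m i (i-m) (by omega), zsAux_eq_zsw m i (i-m-1) (by omega)]
  have e1 : (List.range (m-2)).map (fun j => zsAux m i (i-2-j))
      = (List.range (m-2)).map (fun j => zsw m (i-2-j)) :=
    List.map_congr_left (fun j hj => zsAux_eq_zsw m i _ (by rw [List.mem_range] at hj; omega))
  have e2 : (List.range (m-2)).map (fun j => zsAux m i (i-m+1+j))
      = (List.range (m-2)).map (fun j => zsw m (i-m+1+j)) :=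
    List.map_congr_left (fun j hj => zsAux_eq_zsw m i _ (by rw [List.mem_range] at hj; omega))
  rw [e1, e2]; rfl

def pad (j : ℕ) : List ℕ := if j % 2 = 0 then [0] else []

lemma pad_add_two (j : ℕ) : pad (j + 2) = pad j := by
  simp [pad, Nat.add_mod_right]

lemma dRun_zero (m a : ℕ) : dRun m a 0 = [] := rfl

lemma aRun_zero (m b : ℕ) : aRun m b 0 = [] := rfl

lemma dRun_front (m a c : ℕ) : dRun m a (c+1) = zsw m a ++ dRun m (a-1) c := by
  rw [dRun, List.range_succ_eq_map, List.map_cons, List.map_map, List.flatten_cons]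
  have e : (fun j => zsw m (a - j)) ∘ Nat.succ = fun j => zsw m (a - 1 - j) := by
    funext j; simp only [Function.comp_apply]; congr 1; omega
  rw [e, Nat.sub_zero]; rfl

lemma dRun_back (m a c : ℕ) : dRun m a (c+1) = dRun m a c ++ zsw m (a - c) := by
  rw [dRun, List.range_succ, List.map_append, List.flatten_append]; simp [dRun]

lemma aRun_front (m b c : ℕ) : aRun m b (c+1) = zsw m b ++ aRun m (b+1) c := by
  rw [aRun, List.range_succ_eq_map, List.map_cons, List.map_map, List.flatten_cons]
  have e : (fun j => zsw m (b + j)) ∘ Nat.succ = fun j => zsw m (b + 1 + j) := by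
    funext j; simp only [Function.comp_apply]; congr 1; omega
  rw [e, Nat.add_zero]; rfl

lemma aRun_back (m b c : ℕ) : aRun m b (c+1) = aRun m b c ++ zsw m (b + c) := by
  rw [aRun, List.range_succ, List.map_append, List.flatten_append]; simp [aRun]

lemma phiW_nil (m : ℕ) : phiW m [] = [] := rfl

lemma phiW_append (m : ℕ) (u v : List ℕ) : phiW m (u ++ v) = phiW m u ++ phiW m v := by
  simp [phiW]

lemma phiW_cons (m : ℕ) (a : ℕ) (u : List ℕ) : phiW m (a :: u) = phiL m a ++ phiW m u := by
  simp [phiW]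

lemma phiW_single (m a : ℕ) : phiW m [a] = phiL m a := by
  simp [phiW]

lemma append_tail_congr {a b c d : List ℕ} (h : a ++ b = c ++ d) (t : List ℕ) :
    a ++ (b ++ t) = c ++ (d ++ t) := by
  rw [← List.append_assoc, ← List.append_assoc, h]

lemma desc_eq (m M : ℕ)
    (hIH : ∀ j, j ≤ M → phiW m (zsw m j) ++ pad j = pad (j+1) ++ zsw m (j+1)) :
    ∀ c a, c ≤ a → a ≤ M →
      phiW m (dRun m a c) ++ pad (a - c + 1) = pad (a+1) ++ dRun m (a+1) c := by
  intro c
  induction c with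
  | zero => intro a _ _; simp [dRun_zero, phiW_nil]
  | succ c ih =>
    intro a hca haM
    rw [dRun_front, phiW_append, List.append_assoc]
    have e : a - (c+1) + 1 = (a-1) - c + 1 := by omega
    rw [e, ih (a-1) (by omega) (by omega)]
    have e2 : (a-1) + 1 = a := by omega
    rw [e2, ← List.append_assoc, hIH a haM, List.append_assoc]
    congr 1
    rw [dRun_front, Nat.add_sub_cancel]

lemma asc_eq (m M : ℕ)
    (hIH : ∀ j, j ≤ M → phiW m (zsw m j) ++ pad j = pad (j+1) ++ zsw m (j+1)) :
    ∀ c b, 1 ≤ b → b + c ≤ M + 1 →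
      phiW m (aRun m b c) ++ pad (b + c - 1) = pad (b+1) ++ aRun m (b+1) c := by
  intro c
  induction c with
  | zero =>
    intro b hb _
    have e : b + 1 = (b - 1) + 2 := by omega
    rw [e, pad_add_two]
    simp [aRun_zero, phiW_nil]
  | succ c ih =>
    intro b hb hbc
    rw [aRun_front, phiW_append, List.append_assoc]
    have e : b + (c+1) - 1 = (b+1) + c - 1 := by omega
    rw [e, ih (b+1) (by omega) (by omega)]
    have e2 : pad (b + 2) = pad b := pad_add_two b
    rw [show b + 1 + 1 = b + 2 by omega, e2, ← List.append_assoc, hIH b (by omega),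
      List.append_assoc]
    congr 1
    rw [aRun_front, show b + 1 + 1 = b + 2 by omega]

lemma zsw_smallK (m K i : ℕ) (hi : i = K + 2) (him : i ≤ m) :
    zsw m i = dRun m K K ++ [K+1] ++ aRun m 1 K := by
  have h := zsw_small m i (by omega) him
  rw [show i - 2 = K by omega, show i - 1 = K + 1 by omega] at h
  exact h

lemma zsw_bigK (mm e i : ℕ) (hi : i = mm + 3 + e) :
    zsw (mm+2) i = dRun (mm+2) (mm+e+1) mm ++ zsw (mm+2) (e+1) ++ zsw (mm+2) e
      ++ zsw (mm+2) (e+1) ++ aRun (mm+2) (e+2) mm := by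
  have h := zsw_big (mm+2) i (by omega) (by omega)
  rw [show i - 2 = mm + e + 1 by omega, show mm + 2 - 2 = mm by omega,
    show i - (mm + 2) - 1 = e by omega, show i - (mm + 2) + 1 = e + 2 by omega,
    show i - (mm + 2) = e + 1 by omega] at h
  exact h

lemma pad_one : pad 1 = [] := rfl
lemma pad_two : pad 2 = [0] := rfl

lemma unif (m : ℕ) (hm : 2 ≤ m) :
    ∀ N, phiW m (zsw m N) ++ pad N = pad (N+1) ++ zsw m (N+1) := by
  intro N
  induction N using Nat.strong_induction_on with
  | _ N IH =>
  rcases Nat.lt_or_ge N 2 with h2 | h2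
  · interval_cases N
    · simp [zsw_zero, zsw_one, phiW_nil, pad]
    · have hZ2 : zsw m 2 = [1] := by
        rw [zsw_smallK m 0 2 rfl hm, dRun_zero, aRun_zero]; rfl
      rw [zsw_one, hZ2, phiW_single, phiL, if_neg (by omega), pad_one, pad_two]
      rfl
  · have hIH : ∀ j, j ≤ N - 1 → phiW m (zsw m j) ++ pad j = pad (j+1) ++ zsw m (j+1) :=
      fun j hj => IH j (by omega)
    rcases Nat.lt_or_ge N m with hA | hBC
    · -- Case A : 2 ≤ N < m
      obtain ⟨K, rfl⟩ : ∃ K, N = K + 2 := ⟨N - 2, by omega⟩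
      rw [zsw_smallK m K (K+2) rfl (by omega),
          zsw_smallK m (K+1) (K+2+1) (by omega) (by omega)]
      rw [phiW_append, phiW_append, phiW_single, phiL, if_neg (by omega)]
      have hd := desc_eq m (K+1) hIH K K le_rfl (by omega)
      rw [show K - K + 1 = 1 by omega, pad_one, List.append_nil] at hd
      have ha := asc_eq m (K+1) hIH K 1 (by omega) (by omega)
      rw [show 1 + K - 1 = K by omega, pad_two] at ha
      rw [dRun_back, show K + 1 - K = 1 by omega, zsw_one]
      rw [aRun_front, show (1:ℕ) + 1 = 2 by rfl, zsw_one]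
      rw [show pad (K+2) = pad K from pad_add_two K,
          show pad (K+2+1) = pad (K+1) from by rw [show K+2+1 = (K+1)+2 by omega, pad_add_two]]
      simp only [List.append_assoc]
      rw [ha, hd]
      simp
    · rcases Nat.lt_or_ge N (m+1) with hB | hC
      · -- Case B : N = m
        have hNm : N = m := by omega
        subst hNm
        obtain ⟨mm, rfl⟩ : ∃ mm, N = mm + 2 := ⟨N - 2, by omega⟩
        rw [zsw_smallK (mm+2) mm (mm+2) rfl le_rfl,
            zsw_bigK mm 0 (mm+2+1) (by omega)]
        rw [phiW_append, phiW_append, phiW_single, phiL, if_pos (by omega)]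
        have hd := desc_eq (mm+2) (mm+1) hIH mm mm le_rfl (by omega)
        rw [show mm - mm + 1 = 1 by omega, pad_one, List.append_nil] at hd
        have ha := asc_eq (mm+2) (mm+1) hIH mm 1 (by omega) (by omega)
        rw [show 1 + mm - 1 = mm by omega, pad_two] at ha
        rw [zsw_zero, zsw_one]
        rw [show pad (mm+2) = pad mm from pad_add_two mm,
            show pad (mm+2+1) = pad (mm+1) from by rw [show mm+2+1 = (mm+1)+2 by omega, pad_add_two]]
        simp only [List.append_assoc]
        rw [ha, hd]
        simp [show (0:ℕ)+1 = 1 by rfl]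
      · -- Case C : N ≥ m + 1
        obtain ⟨mm, rfl⟩ : ∃ mm, m = mm + 2 := ⟨m - 2, by omega⟩
        obtain ⟨K, rfl⟩ : ∃ K, N = mm + 3 + K := ⟨N - (mm + 3), by omega⟩
        rw [zsw_bigK mm K (mm+3+K) rfl, zsw_bigK mm (K+1) (mm+3+K+1) (by omega)]
        rw [phiW_append, phiW_append, phiW_append, phiW_append]
        have hd := desc_eq (mm+2) (mm+3+K-1) hIH mm (mm+K+1) (by omega) (by omega)
        rw [show mm + K + 1 - mm + 1 = K + 2 by omega, show mm + K + 1 + 1 = mm + K + 2 by omega] at hd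
        have ha := asc_eq (mm+2) (mm+3+K-1) hIH mm (K+2) (by omega) (by omega)
        rw [show K + 2 + mm - 1 = mm + K + 1 by omega, show K + 2 + 1 = K + 3 by omega] at ha
        have t1 := append_tail_congr (hIH (K+1) (by omega)) (aRun (mm+2) (K+3) mm)
        have t2 := append_tail_congr (hIH K (by omega))
          (zsw (mm+2) (K+2) ++ aRun (mm+2) (K+3) mm)
        have t3 := append_tail_congr (hIH (K+1) (by omega))
          (zsw (mm+2) (K+1) ++ (zsw (mm+2) (K+2) ++ aRun (mm+2) (K+3) mm))
        have t4 := append_tail_congr hd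
          (zsw (mm+2) (K+2) ++ (zsw (mm+2) (K+1) ++ (zsw (mm+2) (K+2) ++ aRun (mm+2) (K+3) mm)))
        rw [show pad (mm+3+K) = pad (mm+K+1) from by
              rw [show mm+3+K = (mm+K+1)+2 by omega, pad_add_two],
            show pad (mm+3+K+1) = pad (mm+K+2) from by
              rw [show mm+3+K+1 = (mm+K+2)+2 by omega, pad_add_two]]
        simp only [List.append_assoc]
        rw [ha]
        rw [show pad (K+3) = pad (K+1) from by rw [show K+3 = (K+1)+2 by omega, pad_add_two], t1]
        rw [show pad (K+2) = pad K from pad_add_two K, t2]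
        rw [t3]
        rw [show pad (K+2) = pad (K+1+1) from by rw [show K+2 = K+1+1 by omega]] at t4
        rw [t4]
        simp only [show K+1+1 = K+2 by omega, show K+1+2 = K+3 by omega,
          show mm+(K+1)+1 = mm+K+2 by omega]

lemma rel_even (m : ℕ) (hm : 2 ≤ m) (N : ℕ) (h : N % 2 = 0) :
    zsw m (N+1) = phiW m (zsw m N) ++ [0] := by
  have hu := unif m hm N
  rw [pad, pad, if_pos h, if_neg (by omega)] at hu
  simpa using hu.symm

lemma rel_odd (m : ℕ) (hm : 2 ≤ m) (N : ℕ) (h : N % 2 = 1) :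
    phiW m (zsw m N) = 0 :: zsw m (N+1) := by
  have hu := unif m hm N
  rw [pad, pad, if_neg (by omega), if_pos (by omega)] at hu
  simpa using hu

lemma pal_getLast {q : List ℕ} (h : Pal q) : q.getLast? = q.head? := by
  rw [← List.head?_reverse, h]

lemma prefix_append_cases {r x y : List ℕ} (h : r <+: x ++ y) :
    r <+: x ∨ ∃ r', r = x ++ r' ∧ r' <+: y := by
  rcases le_or_gt r.length x.length with hl | hl
  · exact Or.inl (List.prefix_of_prefix_length_le h (x.prefix_append y) hl)
  · right
    have hx : x <+: r := List.prefix_of_prefix_length_le (x.prefix_append y) h (by omega)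
    obtain ⟨r', rfl⟩ := hx
    exact ⟨r', rfl, (List.prefix_append_right_inj x).mp h⟩

lemma prefix_single {l : List ℕ} {x : ℕ} (h : l <+: [x]) : l = [] ∨ l = [x] := by
  rcases h with ⟨t, ht⟩
  rcases l with _|⟨b,l⟩
  · exact Or.inl rfl
  · right; simp at ht; simp [ht.1, ht.2.1]

lemma prefix_pair {l : List ℕ} {x y : ℕ} (h : l <+: [x, y]) : l = [] ∨ l = [x] ∨ l = [x, y] := by
  rcases h with ⟨t, ht⟩
  rcases l with _|⟨c,l⟩
  · exact Or.inl rfl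
  rcases l with _|⟨d,l⟩ <;> simp_all

lemma rev_phiW (m : ℕ) : ∀ u : List ℕ, 0 :: (phiW m u).reverse = phiW m u.reverse ++ [0] := by
  intro u
  induction u with
  | nil => rfl
  | cons a t ih =>
    rw [phiW_cons, List.reverse_append, List.reverse_cons, phiW_append, phiW_single,
      ← List.cons_append, ih]
    simp only [List.append_assoc]
    congr 1
    by_cases hA : a = m - 1 <;> simp [phiL, hA]

lemma phiL_head (m a : ℕ) : ∃ s, phiL m a = 0 :: s := by
  by_cases h : a = m-1 <;> simp [phiL, h]

lemma phiW_head (m : ℕ) (u : List ℕ) (hu : u ≠ []) : ∃ t, phiW m u = 0 :: t := by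
  rcases u with _|⟨a,t⟩
  · exact absurd rfl hu
  · obtain ⟨s, hs⟩ := phiL_head m a
    exact ⟨s ++ phiW m t, by rw [phiW_cons, hs]; rfl⟩

lemma phiW0_head (m : ℕ) (u : List ℕ) : ∃ t, phiW m u ++ [0] = 0 :: t := by
  rcases u with _|⟨a,t⟩
  · exact ⟨[], rfl⟩
  · obtain ⟨s, hs⟩ := phiW_head m (a::t) (by simp)
    exact ⟨s ++ [0], by rw [hs]; rfl⟩

lemma phiW_inj (m : ℕ) (hm : 2 ≤ m) : ∀ u v : List ℕ, phiW m u = phiW m v → u = v := by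
  intro u
  induction u with
  | nil =>
    intro v h
    rcases v with _|⟨b,s⟩
    · rfl
    · obtain ⟨s', hs'⟩ := phiL_head m b
      rw [phiW_cons, hs'] at h
      simp [phiW_nil] at h
  | cons a t ih =>
    intro v h
    rcases v with _|⟨b,s⟩
    · obtain ⟨s', hs'⟩ := phiL_head m a
      rw [phiW_cons, hs'] at h
      simp [phiW_nil] at h
    · rw [phiW_cons, phiW_cons] at h
      by_cases ha : a = m-1 <;> by_cases hb : b = m-1
      · rw [phiL, if_pos ha, phiL, if_pos hb] at h
        simp only [List.cons_append, List.nil_append, List.cons.injEq, true_and] at h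
        rw [ih s h, ha, hb]
      · rw [phiL, if_pos ha, phiL, if_neg hb] at h
        simp only [List.cons_append, List.nil_append, List.cons.injEq, true_and] at h
        rcases t with _|⟨c,t'⟩
        · simp [phiW_nil] at h
        · obtain ⟨s', hs'⟩ := phiL_head m c
          rw [phiW_cons, hs'] at h
          simp at h
      · rw [phiL, if_neg ha, phiL, if_pos hb] at h
        simp only [List.cons_append, List.nil_append, List.cons.injEq, true_and] at h
        rcases s with _|⟨c,s'⟩
        · simp [phiW_nil] at h
        · obtain ⟨s'', hs''⟩ := phiL_head m c
          rw [phiW_cons, hs''] at h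
          simp at h
      · rw [phiL, if_neg ha, phiL, if_neg hb] at h
        simp only [List.cons_append, List.nil_append, List.cons.injEq, true_and] at h
        obtain ⟨h1, h2⟩ := h
        have hab : a = b := by omega
        rw [hab, ih s h2]

lemma key0 (m : ℕ) (hm : 2 ≤ m) :
    ∀ u r : List ℕ, r <+: phiW m u → r.getLast? = some 0 →
      ∃ p, p <+: u ∧ r = phiW m p ++ [0] := by
  intro u
  induction u with
  | nil =>
    intro r hr hl
    rw [phiW_nil, List.prefix_nil] at hr
    subst hr; simp at hl
  | cons a t ih =>
    intro r hr hl
    rw [phiW_cons] at hr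
    rcases prefix_append_cases hr with hx | ⟨r', rfl, hr'⟩
    · by_cases ha : a = m - 1
      · rw [phiL, if_pos ha] at hx
        rcases prefix_single hx with rfl | rfl
        · simp at hl
        · exact ⟨[], List.nil_prefix, by simp [phiW_nil]⟩
      · rw [phiL, if_neg ha] at hx
        rcases prefix_pair hx with rfl | rfl | rfl
        · simp at hl
        · exact ⟨[], List.nil_prefix, by simp [phiW_nil]⟩
        · simp at hl
    · rcases Classical.em (r' = []) with rfl | hne
      · by_cases ha : a = m - 1
        · refine ⟨[], List.nil_prefix, ?_⟩
          simp [phiW_nil, phiL, ha]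
        · rw [List.append_nil] at hl
          rw [phiL, if_neg ha] at hl
          simp at hl
      · have hl' : r'.getLast? = some 0 := by
          rwa [List.getLast?_append_of_ne_nil _ hne] at hl
        obtain ⟨p, hp, rfl⟩ := ih r' hr' hl'
        exact ⟨a :: p, List.cons_prefix_cons.mpr ⟨rfl, hp⟩, by rw [phiW_cons, List.append_assoc]⟩

lemma key1 (m : ℕ) (hm : 2 ≤ m) :
    ∀ u r : List ℕ, r <+: phiW m u → r.getLast? = some 1 →
      ∃ p, (p ++ [0]) <+: u ∧ r = phiW m (p ++ [0]) := by
  intro u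
  induction u with
  | nil =>
    intro r hr hl
    rw [phiW_nil, List.prefix_nil] at hr
    subst hr; simp at hl
  | cons a t ih =>
    intro r hr hl
    rw [phiW_cons] at hr
    rcases prefix_append_cases hr with hx | ⟨r', rfl, hr'⟩
    · by_cases ha : a = m - 1
      · rw [phiL, if_pos ha] at hx
        rcases prefix_single hx with rfl | rfl
        · simp at hl
        · simp at hl
      · rw [phiL, if_neg ha] at hx
        rcases prefix_pair hx with rfl | rfl | rfl
        · simp at hl
        · simp at hl
        · have ha0 : a = 0 := by simp at hl; omega
          subst ha0
          refine ⟨[], List.cons_prefix_cons.mpr ⟨rfl, List.nil_prefix⟩, ?_⟩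
          rw [List.nil_append, phiW_single, phiL, if_neg (by omega)]
    · rcases Classical.em (r' = []) with rfl | hne
      · rw [List.append_nil] at hl ⊢
        by_cases ha : a = m - 1
        · rw [phiL, if_pos ha] at hl; simp at hl
        · rw [phiL, if_neg ha] at hl
          simp at hl
          have ha0 : a = 0 := by omega
          subst ha0
          refine ⟨[], List.cons_prefix_cons.mpr ⟨rfl, List.nil_prefix⟩, ?_⟩
          rw [List.nil_append, phiW_single, phiL, if_neg (by omega)]
      · have hl' : r'.getLast? = some 1 := by
          rwa [List.getLast?_append_of_ne_nil _ hne] at hl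
        obtain ⟨p, hp, rfl⟩ := ih r' hr' hl'
        refine ⟨a :: p, ?_, ?_⟩
        · rw [List.cons_append]
          exact List.cons_prefix_cons.mpr ⟨rfl, hp⟩
        · rw [List.cons_append, phiW_cons]

lemma palB_fwd (m : ℕ) (hm : 2 ≤ m) (u q : List ℕ) (hq : Pal q)
    (hpre : q <+: phiW m u ++ [0]) :
    q = [] ∨ ∃ p, Pal p ∧ p <+: u ∧ q = phiW m p ++ [0] := by
  rcases Classical.em (q = []) with rfl | hne
  · exact Or.inl rfl
  right
  obtain ⟨t0, ht0⟩ := phiW0_head m u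
  have hq0 : q.head? = some 0 := by
    rcases q with _|⟨c,q'⟩
    · exact absurd rfl hne
    · rw [ht0] at hpre
      rw [(List.cons_prefix_cons.mp hpre).1]
      rfl
  have hlast : q.getLast? = some 0 := by rw [pal_getLast hq, hq0]
  have hform : ∃ p, p <+: u ∧ q = phiW m p ++ [0] := by
    rcases prefix_append_cases hpre with h1 | ⟨r', hq', hr'⟩
    · exact key0 m hm u q h1 hlast
    · rcases prefix_single hr' with rfl | rfl
      · rw [List.append_nil] at hq'
        subst hq'
        exact key0 m hm u _ List.prefix_rfl hlast
      · exact ⟨u, List.prefix_rfl, hq'⟩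
  obtain ⟨p, hp, rfl⟩ := hform
  refine ⟨p, ?_, hp, rfl⟩
  have hq' : (phiW m p ++ [0]).reverse = phiW m p ++ [0] := hq
  rw [List.reverse_append, List.reverse_singleton, List.singleton_append, rev_phiW] at hq'
  exact phiW_inj m hm _ _ ((List.append_left_inj [0]).mp hq')

lemma palB_bwd (m : ℕ) (hm : 2 ≤ m) (u p : List ℕ) (hp : Pal p) (hpre : p <+: u) :
    Pal (phiW m p ++ [0]) ∧ (phiW m p ++ [0]) <+: (phiW m u ++ [0]) := by
  constructor
  · unfold Pal
    rw [List.reverse_append, List.reverse_singleton, List.singleton_append, rev_phiW, hp]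
  · obtain ⟨s, rfl⟩ := hpre
    rw [phiW_append, List.append_assoc]
    refine (List.prefix_append_right_inj (phiW m p)).mpr ?_
    obtain ⟨t0, ht0⟩ := phiW0_head m s
    rw [ht0]
    exact List.cons_prefix_cons.mpr ⟨rfl, List.nil_prefix⟩

lemma palC_fwd (m : ℕ) (hm : 2 ≤ m) (v u q : List ℕ) (hu : u = 0 :: v) (hq : Pal q)
    (hpre : (0 :: q) <+: phiW m u) :
    q = [] ∨ ∃ p, Pal p ∧ p ≠ [] ∧ p <+: u ∧ phiW m p = 0 :: q := by
  rcases Classical.em (q = []) with rfl | hne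
  · exact Or.inl rfl
  right
  have h01 : phiW m u = 0 :: 1 :: phiW m v := by
    subst hu
    rw [phiW_cons, phiL, if_neg (by omega)]
    rfl
  have hq1 : q.head? = some 1 := by
    rcases q with _|⟨c,q'⟩
    · exact absurd rfl hne
    · rw [h01] at hpre
      have h2 := (List.cons_prefix_cons.mp hpre).2
      rw [(List.cons_prefix_cons.mp h2).1]
      rfl
  have hlast : (0 :: q).getLast? = some 1 := by
    rw [show (0 :: q) = [0] ++ q from rfl, List.getLast?_append_of_ne_nil _ hne,
      pal_getLast hq, hq1]
  obtain ⟨p', hp', hr⟩ := key1 m hm u (0 :: q) hpre hlast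
  refine ⟨p' ++ [0], ?_, by simp, hp', hr.symm⟩
  have h1 := rev_phiW m (p' ++ [0])
  rw [← hr, List.reverse_cons, hq] at h1
  have h3 : (0:ℕ) :: (q ++ [0]) = phiW m (p' ++ [0]) ++ [0] := by rw [← hr]; rfl
  exact phiW_inj m hm _ _ ((List.append_left_inj [0]).mp (h1.symm.trans h3))

lemma palC_bwd (m : ℕ) (hm : 2 ≤ m) (v u p t : List ℕ) (hu : u = 0 :: v) (hp : Pal p)
    (hne : p ≠ []) (hpre : p <+: u) (ht : phiW m p = 0 :: t) :
    Pal t ∧ (0 :: t) <+: phiW m u := by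
  constructor
  · have h1 := rev_phiW m p
    rw [hp, ht] at h1
    rw [List.reverse_cons] at h1
    show t.reverse = t
    have : t.reverse ++ [0] = t ++ [0] := by
      have h2 : (0 :: (t.reverse ++ [0]) : List ℕ) = 0 :: t ++ [0] := h1
      exact (List.cons.injEq _ _ _ _).mp h2 |>.2
    simpa using this
  · rw [← ht]
    obtain ⟨s, rfl⟩ := hpre
    rw [phiW_append]
    exact List.prefix_append _ _

lemma zsw_odd_head (m : ℕ) (hm : 2 ≤ m) (N : ℕ) (h : N % 2 = 1) :
    ∃ v, zsw m N = 0 :: v := by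
  obtain ⟨N', rfl⟩ : ∃ N', N = N' + 1 := ⟨N - 1, by omega⟩
  rw [rel_even m hm N' (by omega)]
  exact phiW0_head m (zsw m N')

/-- For every `n ≥ -1`, a finite word `p` is a palindromic prefix of the p-singular word
`zₙ` if and only if `p = z_i` for some `i` with `-1 ≤ i ≤ n` and `i` of the same parity
as `n`, together with `i = -1` (giving the empty word). In the shifted indexing
`N = n + 1` and `k = i + 1`: the palindromic prefixes of `zsw m N` are exactly the
`zsw m k` with `k ≤ N` and (`k = 0` or `k ≡ N (mod 2)`). -/
theorem psingular_pal_prefixes (m : ℕ) (hm : 2 ≤ m) (N : ℕ) (p : List ℕ) :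
    (Pal p ∧ p <+: zsw m N) ↔
      ∃ k, k ≤ N ∧ (k = 0 ∨ k % 2 = N % 2) ∧ p = zsw m k := by
  induction N generalizing p with
  | zero =>
    constructor
    · rintro ⟨hp, hpre⟩
      rw [zsw_zero, List.prefix_nil] at hpre
      exact ⟨0, le_refl 0, Or.inl rfl, by rw [hpre, zsw_zero]⟩
    · rintro ⟨k, hk, -, rfl⟩
      have hk0 : k = 0 := by omega
      subst hk0
      rw [zsw_zero]
      exact ⟨rfl, List.nil_prefix⟩
  | succ N ihN =>
    rcases Nat.mod_two_eq_zero_or_one N with hN | hN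
    · -- N even
      have hrel := rel_even m hm N hN
      constructor
      · rintro ⟨hp, hpre⟩
        rw [hrel] at hpre
        rcases palB_fwd m hm (zsw m N) p hp hpre with rfl | ⟨p', hp', hpre', rfl⟩
        · exact ⟨0, by omega, Or.inl rfl, (zsw_zero m).symm⟩
        · obtain ⟨k, hk, hpar, rfl⟩ := (ihN p').mp ⟨hp', hpre'⟩
          have hke : k % 2 = 0 := by rcases hpar with rfl | h <;> omega
          exact ⟨k+1, by omega, Or.inr (by omega), (rel_even m hm k hke).symm⟩
      · rintro ⟨k, hk, hpar, rfl⟩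
        rcases Classical.em (k = 0) with rfl | hk0
        · rw [zsw_zero]
          exact ⟨rfl, List.nil_prefix⟩
        · have hko : k % 2 = 1 := by rcases hpar with rfl | h <;> omega
          obtain ⟨k', rfl⟩ : ∃ k', k = k' + 1 := ⟨k - 1, by omega⟩
          have h' := (ihN (zsw m k')).mpr ⟨k', by omega, Or.inr (by omega), rfl⟩
          have hb := palB_bwd m hm (zsw m N) (zsw m k') h'.1 h'.2
          rw [hrel, rel_even m hm k' (by omega)]
          exact hb
    · -- N odd
      have hrel := rel_odd m hm N hN
      obtain ⟨v, hv⟩ := zsw_odd_head m hm N hN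
      constructor
      · rintro ⟨hp, hpre⟩
        have hpre' : (0 :: p) <+: phiW m (zsw m N) := by
          rw [hrel]
          exact List.cons_prefix_cons.mpr ⟨rfl, hpre⟩
        rcases palC_fwd m hm v (zsw m N) p hv hp hpre' with rfl | ⟨p', hp', hne', hpre'', hphi⟩
        · exact ⟨0, by omega, Or.inl rfl, (zsw_zero m).symm⟩
        · obtain ⟨k, hk, hpar, rfl⟩ := (ihN p').mp ⟨hp', hpre''⟩
          have hko : k % 2 = 1 := by
            rcases hpar with rfl | h
            · exact absurd (zsw_zero m) hne'
            · omega
          refine ⟨k+1, by omega, Or.inr (by omega), ?_⟩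
          rw [rel_odd m hm k hko] at hphi
          exact ((List.cons.injEq _ _ _ _).mp hphi).2.symm
      · rintro ⟨k, hk, hpar, rfl⟩
        rcases Classical.em (k = 0) with rfl | hk0
        · rw [zsw_zero]
          exact ⟨rfl, List.nil_prefix⟩
        · have hke : k % 2 = 0 := by rcases hpar with rfl | h <;> omega
          obtain ⟨k', rfl⟩ : ∃ k', k = k' + 1 := ⟨k - 1, by omega⟩
          have h' := (ihN (zsw m k')).mpr ⟨k', by omega, Or.inr (by omega), rfl⟩
          obtain ⟨v', hv'⟩ := zsw_odd_head m hm k' (by omega)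
          have hne : zsw m k' ≠ [] := by rw [hv']; simp
          have ht : phiW m (zsw m k') = 0 :: zsw m (k'+1) := rel_odd m hm k' (by omega)
          have hc := palC_bwd m hm v (zsw m N) (zsw m k') (zsw m (k'+1)) hv h'.1 hne h'.2 ht
          refine ⟨hc.1, ?_⟩
          have h2 := hc.2
          rw [hrel] at h2
          exact (List.cons_prefix_cons.mp h2).2
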